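/- Let r ≥ 1 be an integer and set m = m_K. Suppose C_1 > 0 is a constant such that 𝒦_r(G, s) ≥ C_1 · 𝒲_r(G, s) for every G ∈ ℝ^{N×m} and every s > 0. Then for every target signal F ∈ ℝ^{N×m} and every t > 0, ‖F − F^(K)‖_F ≥ m^{−1/2} C_1 · 𝒲_r(F, t) − (t/2)^r · μ_high^{K + r/2} · ‖F^(0)‖_F. -/
import Mathlib


open Matrix

noncomputable section

/-- Euclidean (2-)norm on `ℝ^N`. -/
def rnorm2 {N : ℕ} (f : Fin N → ℝ) : ℝ := Real.sqrt (∑ i, f i ^ 2)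

/-- Frobenius norm of a real matrix. -/
def frob {N m : ℕ} (M : Matrix (Fin N) (Fin m) ℝ) : ℝ := Real.sqrt (∑ i, ∑ j, M i j ^ 2)

/-- Entrywise ReLU of a vector. -/
def reluV {N : ℕ} (f : Fin N → ℝ) : Fin N → ℝ := fun i => max (f i) 0

/-- Entrywise ReLU of a matrix. -/
def reluM {N m : ℕ} (M : Matrix (Fin N) (Fin m) ℝ) : Matrix (Fin N) (Fin m) ℝ :=
  Matrix.of fun i j => max (M i j) 0

/-- `P f = f - ⟨f, h⟩ h`. -/
def Pv {N : ℕ} (h : Fin N → ℝ) (f : Fin N → ℝ) : Fin N → ℝ := f - (f ⬝ᵥ h) • h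

/-- `P` applied columnwise to a matrix. -/
def Pcol {N m : ℕ} (h : Fin N → ℝ) (M : Matrix (Fin N) (Fin m) ℝ) :
    Matrix (Fin N) (Fin m) ℝ :=
  Matrix.of fun i j => M i j - ((fun x => M x j) ⬝ᵥ h) * h i

/-- `μ_high = max{|μ_2|, …, |μ_N|}` (indices `i : Fin N` with `i ≥ 1`). -/
def muHigh {N : ℕ} (μ : Fin N → ℝ) : ℝ := ⨆ i : {i : Fin N // 0 < (i : ℕ)}, |μ i.1|

/-- Euclidean (2-)norm on `ℂ^N`. -/
def cnorm2 {N : ℕ} (f : Fin N → ℂ) : ℝ := Real.sqrt (∑ i, ‖f i‖ ^ 2)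

/-- The spectral operator `Σ_j c_j u_j u_j^*`. -/
def specOp {N : ℕ} (u : Fin N → Fin N → ℂ) (c : Fin N → ℂ) : Matrix (Fin N) (Fin N) ℂ :=
  ∑ j, c j • Matrix.vecMulVec (u j) (star (u j))

/-- The translation operator `T̃_s = Σ_j e^{i s √ν_j} u_j u_j^*`. -/
def Tmat {N : ℕ} (u : Fin N → Fin N → ℂ) (nu : Fin N → ℝ) (s : ℝ) :
    Matrix (Fin N) (Fin N) ℂ :=
  specOp u (fun j => Complex.exp (Complex.I * (s : ℂ) * (Real.sqrt (nu j) : ℂ)))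

/-- The `r`-th modulus of smoothness `ω̃_r(f,t) = sup_{|s| ≤ t} ‖(T̃_s - I)^r f‖₂`. -/
def omegaMod {N : ℕ} (u : Fin N → Fin N → ℂ) (nu : Fin N → ℝ) (r : ℕ) (f : Fin N → ℂ)
    (t : ℝ) : ℝ :=
  ⨆ s : {s : ℝ // |s| ≤ t}, cnorm2 (((Tmat u nu s.1 - 1) ^ r).mulVec f)

/-- Functional calculus power `Σ_j ν_j^x u_j u_j^*`; for `ν_1 = 0, ν_i = |μ_i| (i ≥ 2)`
and `x = r/2 > 0` this is exactly the high pass `H̃^{r/2} = Σ_{i=2}^N |μ_i|^{r/2} h_i h_iᵀ`. -/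
def Lpow {N : ℕ} (u : Fin N → Fin N → ℂ) (nu : Fin N → ℝ) (x : ℝ) :
    Matrix (Fin N) (Fin N) ℂ :=
  specOp u (fun j => ((nu j ^ x : ℝ) : ℂ))

/-- Multichannel modulus of smoothness `𝒲_r(F, t) = Σ_{j=1}^m ω̃_r(f_j, t)`. -/
def Wcal {N m : ℕ} (u : Fin N → Fin N → ℂ) (nu : Fin N → ℝ) (r : ℕ)
    (F : Matrix (Fin N) (Fin m) ℂ) (t : ℝ) : ℝ :=
  ∑ j, omegaMod u nu r (fun i => F i j) t

/-- Multichannel `K`-functional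
`𝒦_r(F, t) = inf_{g_1, …, g_m} ( Σ_j ‖f_j - g_j‖₂ + (t/2)^r Σ_j ‖H̃^{r/2} g_j‖₂ )`. -/
def Kcal {N m : ℕ} (u : Fin N → Fin N → ℂ) (nu : Fin N → ℝ) (r : ℕ)
    (F : Matrix (Fin N) (Fin m) ℂ) (t : ℝ) : ℝ :=
  ⨅ G : Matrix (Fin N) (Fin m) ℂ,
    (∑ j, cnorm2 (fun i => F i j - G i j) +
      (t / 2) ^ r * ∑ j, cnorm2 ((Lpow u nu ((r : ℝ) / 2)).mulVec (fun i => G i j)))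

/-- Complexification of a family of real vectors. -/
def cvec {N : ℕ} (h : Fin N → Fin N → ℝ) : Fin N → Fin N → ℂ := fun i k => (h i k : ℂ)

/-- The eigenvalues `ν_1 = 0` and `ν_i = |μ_i|` for `i ≥ 2` of the high pass `H̃`. -/
def nuOf {N : ℕ} (μ : Fin N → ℝ) : Fin N → ℝ := fun i => if (i : ℕ) = 0 then 0 else |μ i|

/-- Complexification of a real matrix. -/
def cmat {N m : ℕ} (M : Matrix (Fin N) (Fin m) ℝ) : Matrix (Fin N) (Fin m) ℂ :=
  M.map (fun x => (x : ℂ))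


section aux
open Finset

variable {N : ℕ} {h : Fin N → Fin N → ℝ}

lemma hortho2 (hortho : ∀ i j, h i ⬝ᵥ h j = if i = j then 1 else 0) (i k : Fin N) :
    (∑ j, h j i * h j k) = if i = k then 1 else 0 := by
  let Q : Matrix (Fin N) (Fin N) ℝ := Matrix.of fun a b => h a b
  have hQ : Q * Qᵀ = 1 := by
    ext a b
    simpa [Q, Matrix.mul_apply, Matrix.transpose_apply, Matrix.one_apply, dotProduct]
      using hortho a b
  have hQ2 : Qᵀ * Q = 1 := mul_eq_one_comm.mp hQ
  have h3 := congrArg (fun M => M i k) hQ2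
  simpa [Q, Matrix.mul_apply, Matrix.transpose_apply, Matrix.one_apply] using h3

lemma parseval (hortho : ∀ i j, h i ⬝ᵥ h j = if i = j then 1 else 0) (v : Fin N → ℝ) :
    ∑ j, (h j ⬝ᵥ v) ^ 2 = ∑ i, v i ^ 2 := by
  have key : ∀ j : Fin N, (h j ⬝ᵥ v) ^ 2 = ∑ i, ∑ k, (h j i * h j k) * (v i * v k) := by
    intro j
    rw [sq, dotProduct, Finset.sum_mul_sum]
    exact Finset.sum_congr rfl fun i _ => Finset.sum_congr rfl fun k _ => by ring
  calc ∑ j, (h j ⬝ᵥ v) ^ 2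
      = ∑ j, ∑ i, ∑ k, (h j i * h j k) * (v i * v k) := Finset.sum_congr rfl fun j _ => key j
    _ = ∑ i, ∑ k, ∑ j, (h j i * h j k) * (v i * v k) := by
        rw [Finset.sum_comm]
        exact Finset.sum_congr rfl fun i _ => Finset.sum_comm
    _ = ∑ i, ∑ k, (if i = k then 1 else 0) * (v i * v k) := by
        refine Finset.sum_congr rfl fun i _ => Finset.sum_congr rfl fun k _ => ?_
        rw [← Finset.sum_mul, hortho2 hortho i k]
    _ = ∑ i, v i ^ 2 := by
        refine Finset.sum_congr rfl fun i _ => ?_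
        simp [ite_mul, sq]

lemma comb_norm (hortho : ∀ i j, h i ⬝ᵥ h j = if i = j then 1 else 0) (c : Fin N → ℝ) :
    ∑ i, (∑ j, c j * h j i) ^ 2 = ∑ j, c j ^ 2 := by
  have key : ∀ i : Fin N, (∑ j, c j * h j i) ^ 2 = ∑ j, ∑ k, (c j * c k) * (h j i * h k i) := by
    intro i
    rw [sq, Finset.sum_mul_sum]
    exact Finset.sum_congr rfl fun j _ => Finset.sum_congr rfl fun k _ => by ring
  calc ∑ i, (∑ j, c j * h j i) ^ 2
      = ∑ i, ∑ j, ∑ k, (c j * c k) * (h j i * h k i) := Finset.sum_congr rfl fun i _ => key i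
    _ = ∑ j, ∑ k, ∑ i, (c j * c k) * (h j i * h k i) := by
        rw [Finset.sum_comm]
        exact Finset.sum_congr rfl fun j _ => Finset.sum_comm
    _ = ∑ j, ∑ k, (c j * c k) * (if j = k then 1 else 0) := by
        refine Finset.sum_congr rfl fun j _ => Finset.sum_congr rfl fun k _ => ?_
        rw [← Finset.mul_sum]
        congr 1
        exact hortho j k
    _ = ∑ j, c j ^ 2 := by
        refine Finset.sum_congr rfl fun j _ => ?_
        simp [mul_ite, sq]

end aux

section aux
open Finset

variable {N : ℕ} {h : Fin N → Fin N → ℝ}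

lemma Pv_apply (h0 v : Fin N → ℝ) (i : Fin N) :
    Pv h0 v i = v i - (v ⬝ᵥ h0) * h0 i := rfl

lemma dot_Pv (hortho : ∀ i j, h i ⬝ᵥ h j = if i = j then 1 else 0) (i0 : Fin N)
    (v : Fin N → ℝ) (j : Fin N) :
    h j ⬝ᵥ Pv (h i0) v = if j = i0 then 0 else h j ⬝ᵥ v := by
  have : h j ⬝ᵥ Pv (h i0) v = h j ⬝ᵥ v - (v ⬝ᵥ h i0) * (h j ⬝ᵥ h i0) := by
    rw [Pv, dotProduct_sub, dotProduct_smul, smul_eq_mul]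
  rw [this, hortho j i0]
  by_cases hj : j = i0
  · subst hj
    simp [dotProduct_comm]
  · simp [hj]

lemma Pv_norm_sq (hortho : ∀ i j, h i ⬝ᵥ h j = if i = j then 1 else 0) (i0 : Fin N)
    (v : Fin N → ℝ) :
    ∑ i, (Pv (h i0) v i) ^ 2 = ∑ j, (if j = i0 then 0 else (h j ⬝ᵥ v) ^ 2) := by
  rw [← parseval hortho (Pv (h i0) v)]
  refine Finset.sum_congr rfl fun j _ => ?_
  rw [dot_Pv hortho i0 v j]
  by_cases hj : j = i0 <;> simp [hj]

lemma Pv_le (hortho : ∀ i j, h i ⬝ᵥ h j = if i = j then 1 else 0) (i0 : Fin N)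
    (v : Fin N → ℝ) :
    ∑ i, (Pv (h i0) v i) ^ 2 ≤ ∑ i, v i ^ 2 := by
  rw [Pv_norm_sq hortho i0 v, ← parseval hortho v]
  refine Finset.sum_le_sum fun j _ => ?_
  by_cases hj : j = i0 <;> simp [hj, sq_nonneg]

lemma Pv_min (hortho : ∀ i j, h i ⬝ᵥ h j = if i = j then 1 else 0) (i0 : Fin N)
    (v : Fin N → ℝ) (a : ℝ) :
    ∑ i, (Pv (h i0) v i) ^ 2 ≤ ∑ i, (v i - a * h i0 i) ^ 2 := by
  have h1 : h i0 ⬝ᵥ h i0 = 1 := by simpa using hortho i0 i0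
  have expand : ∀ b : ℝ, ∑ i, (v i - b * h i0 i) ^ 2
      = (∑ i, v i ^ 2) - 2 * b * (v ⬝ᵥ h i0) + b ^ 2 * (h i0 ⬝ᵥ h i0) := by
    intro b
    simp only [dotProduct]
    rw [Finset.mul_sum, Finset.mul_sum, ← Finset.sum_sub_distrib, ← Finset.sum_add_distrib]
    exact Finset.sum_congr rfl fun i _ => by ring
  have hPv : ∑ i, (Pv (h i0) v i) ^ 2 = ∑ i, (v i - (v ⬝ᵥ h i0) * h i0 i) ^ 2 :=
    Finset.sum_congr rfl fun i _ => by rw [Pv_apply]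
  rw [hPv, expand, expand, h1]
  nlinarith [sq_nonneg (a - v ⬝ᵥ h i0)]

lemma relu_Pv (hortho : ∀ i j, h i ⬝ᵥ h j = if i = j then 1 else 0) (i0 : Fin N)
    (hpos : ∀ x, 0 ≤ h i0 x) (v : Fin N → ℝ) :
    ∑ i, (Pv (h i0) (reluV v) i) ^ 2 ≤ ∑ i, (Pv (h i0) v i) ^ 2 := by
  set c : ℝ := v ⬝ᵥ h i0 with hc
  set d : ℝ := max c 0 with hd
  have step1 : ∑ i, (Pv (h i0) (reluV v) i) ^ 2 ≤ ∑ i, (reluV v i - d * h i0 i) ^ 2 :=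
    Pv_min hortho i0 (reluV v) d
  have step2 : ∀ i, (reluV v i - d * h i0 i) ^ 2 ≤ (v i - c * h i0 i) ^ 2 := by
    intro i
    have hdh : d * h i0 i = max (c * h i0 i) 0 := by
      rcases le_total c 0 with hc0 | hc0
      · rw [hd, max_eq_right hc0, max_eq_right (mul_nonpos_of_nonpos_of_nonneg hc0 (hpos i))]
        ring
      · rw [hd, max_eq_left hc0, max_eq_left (mul_nonneg hc0 (hpos i))]
    have habs : |max (v i) 0 - max (c * h i0 i) 0| ≤ |v i - c * h i0 i| :=
      abs_max_sub_max_le_abs _ _ _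
    have : (max (v i) 0 - max (c * h i0 i) 0) ^ 2 ≤ (v i - c * h i0 i) ^ 2 := by
      rw [← sq_abs (max (v i) 0 - max (c * h i0 i) 0), ← sq_abs (v i - c * h i0 i)]
      exact pow_le_pow_left₀ (abs_nonneg _) habs 2
    calc (reluV v i - d * h i0 i) ^ 2
        = (max (v i) 0 - max (c * h i0 i) 0) ^ 2 := by rw [hdh]; rfl
      _ ≤ (v i - c * h i0 i) ^ 2 := this
  have hPv : ∑ i, (Pv (h i0) v i) ^ 2 = ∑ i, (v i - c * h i0 i) ^ 2 :=
    Finset.sum_congr rfl fun i _ => by rw [Pv_apply]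
  rw [hPv]
  exact step1.trans (Finset.sum_le_sum fun i _ => step2 i)

end aux

section aux
open Finset

variable {N : ℕ} {h : Fin N → Fin N → ℝ}

lemma sum_sum_comm {m : ℕ} (X : Matrix (Fin N) (Fin m) ℝ) :
    ∑ i, ∑ j, (X i j) ^ 2 = ∑ j, ∑ i, (X i j) ^ 2 := Finset.sum_comm

lemma eig_dot {H : Matrix (Fin N) (Fin N) ℝ} (hH : H.IsSymm) {μ : Fin N → ℝ}
    (heig : ∀ i, H *ᵥ h i = μ i • h i) (j : Fin N) (v : Fin N → ℝ) :
    h j ⬝ᵥ (H *ᵥ v) = μ j * (h j ⬝ᵥ v) := by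
  rw [Matrix.dotProduct_mulVec, ← hH, Matrix.vecMul_transpose, heig j]
  simp [smul_dotProduct, smul_eq_mul]

lemma HP_bound (hortho : ∀ i j, h i ⬝ᵥ h j = if i = j then 1 else 0)
    {H : Matrix (Fin N) (Fin N) ℝ} (hH : H.IsSymm) {μ : Fin N → ℝ}
    (heig : ∀ i, H *ᵥ h i = μ i • h i) (i0 : Fin N) {B : ℝ}
    (hB : ∀ j : Fin N, j ≠ i0 → |μ j| ≤ B) (v : Fin N → ℝ) :
    ∑ i, (Pv (h i0) (H *ᵥ v) i) ^ 2 ≤ B ^ 2 * ∑ i, (Pv (h i0) v i) ^ 2 := by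
  rw [Pv_norm_sq hortho i0 (H *ᵥ v), Pv_norm_sq hortho i0 v, Finset.mul_sum]
  refine Finset.sum_le_sum fun j _ => ?_
  by_cases hj : j = i0
  · simp [hj]
  · simp only [hj, if_false]
    rw [eig_dot hH heig j v, mul_pow]
    have h1 : μ j ^ 2 ≤ B ^ 2 := by
      rw [← sq_abs (μ j)]
      exact pow_le_pow_left₀ (abs_nonneg _) (hB j hj) 2
    exact mul_le_mul_of_nonneg_right h1 (sq_nonneg _)

lemma sumsq_matmul {n p q : ℕ} (A : Matrix (Fin n) (Fin p) ℝ) (B : Matrix (Fin p) (Fin q) ℝ) :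
    ∑ i, ∑ j, ((A * B) i j) ^ 2 ≤ (∑ i, ∑ k, A i k ^ 2) * (∑ k, ∑ j, B k j ^ 2) := by
  have key : ∀ i j, ((A * B) i j) ^ 2 ≤ (∑ k, A i k ^ 2) * (∑ k, B k j ^ 2) := fun i j => by
    rw [Matrix.mul_apply]
    exact Finset.sum_mul_sq_le_sq_mul_sq _ _ _
  have swapB : (∑ j, ∑ k, B k j ^ 2) = (∑ k, ∑ j, B k j ^ 2) := Finset.sum_comm
  calc ∑ i, ∑ j, ((A * B) i j) ^ 2
      ≤ ∑ i, ∑ j, (∑ k, A i k ^ 2) * (∑ k, B k j ^ 2) :=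
        Finset.sum_le_sum fun i _ => Finset.sum_le_sum fun j _ => key i j
    _ = (∑ i, ∑ k, A i k ^ 2) * (∑ j, ∑ k, B k j ^ 2) := by
        simp_rw [← Finset.mul_sum]
        rw [← Finset.sum_mul]
    _ = (∑ i, ∑ k, A i k ^ 2) * (∑ k, ∑ j, B k j ^ 2) := by rw [swapB]

lemma Pcol_mul {m p : ℕ} (h0 : Fin N → ℝ) (M : Matrix (Fin N) (Fin m) ℝ)
    (W : Matrix (Fin m) (Fin p) ℝ) :
    Pcol h0 (M * W) = Pcol h0 M * W := by
  ext i j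
  simp only [Pcol, Matrix.mul_apply, Matrix.of_apply, dotProduct, sub_mul,
    Finset.sum_sub_distrib, Finset.sum_mul, Finset.mul_sum]
  congr 1
  rw [Finset.sum_comm]
  exact Finset.sum_congr rfl fun k _ => Finset.sum_congr rfl fun x _ => by ring

lemma Pcol_col {m : ℕ} (h0 : Fin N → ℝ) (M : Matrix (Fin N) (Fin m) ℝ)
    (i : Fin N) (j : Fin m) :
    Pcol h0 M i j = Pv h0 (fun x => M x j) i := rfl

lemma sumsq_Pcol_relu {m : ℕ} (hortho : ∀ i j, h i ⬝ᵥ h j = if i = j then 1 else 0)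
    (i0 : Fin N) (hpos : ∀ x, 0 ≤ h i0 x) (A : Matrix (Fin N) (Fin m) ℝ) :
    ∑ i, ∑ j, (Pcol (h i0) (reluM A) i j) ^ 2 ≤ ∑ i, ∑ j, (Pcol (h i0) A i j) ^ 2 := by
  rw [sum_sum_comm (Pcol (h i0) (reluM A)), sum_sum_comm (Pcol (h i0) A)]
  refine Finset.sum_le_sum fun j _ => ?_
  have hrel := relu_Pv hortho i0 hpos (fun i => A i j)
  have e1 : ∀ i : Fin N, Pcol (h i0) (reluM A) i j = Pv (h i0) (reluV (fun x => A x j)) i :=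
    fun i => rfl
  have e2 : ∀ i : Fin N, Pcol (h i0) A i j = Pv (h i0) (fun x => A x j) i := fun i => rfl
  simp only [e1, e2]
  exact hrel

lemma sumsq_Pcol_H {m : ℕ} (hortho : ∀ i j, h i ⬝ᵥ h j = if i = j then 1 else 0)
    {H : Matrix (Fin N) (Fin N) ℝ} (hH : H.IsSymm) {μ : Fin N → ℝ}
    (heig : ∀ i, H *ᵥ h i = μ i • h i) (i0 : Fin N) {B : ℝ}
    (hB : ∀ j : Fin N, j ≠ i0 → |μ j| ≤ B) (A : Matrix (Fin N) (Fin m) ℝ) :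
    ∑ i, ∑ j, (Pcol (h i0) (H * A) i j) ^ 2 ≤ B ^ 2 * ∑ i, ∑ j, (Pcol (h i0) A i j) ^ 2 := by
  rw [sum_sum_comm (Pcol (h i0) (H * A)), sum_sum_comm (Pcol (h i0) A), Finset.mul_sum]
  refine Finset.sum_le_sum fun j _ => ?_
  have hb := HP_bound hortho hH heig i0 hB (fun k => A k j)
  have e1 : ∀ i : Fin N, Pcol (h i0) (H * A) i j = Pv (h i0) (H *ᵥ fun k => A k j) i :=
    fun i => rfl
  have e2 : ∀ i : Fin N, Pcol (h i0) A i j = Pv (h i0) (fun k => A k j) i := fun i => rfl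
  simp only [e1, e2]
  exact hb

lemma sumsq_Pcol_le {m : ℕ} (hortho : ∀ i j, h i ⬝ᵥ h j = if i = j then 1 else 0)
    (i0 : Fin N) (A : Matrix (Fin N) (Fin m) ℝ) :
    ∑ i, ∑ j, (Pcol (h i0) A i j) ^ 2 ≤ ∑ i, ∑ j, (A i j) ^ 2 := by
  rw [sum_sum_comm (Pcol (h i0) A), sum_sum_comm A]
  refine Finset.sum_le_sum fun j _ => ?_
  have hp := Pv_le hortho i0 (fun i => A i j)
  have e2 : ∀ i : Fin N, Pcol (h i0) A i j = Pv (h i0) (fun x => A x j) i := fun i => rfl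
  simp only [e2]
  exact hp

end aux

section aux
open Finset

variable {N : ℕ} {h : Fin N → Fin N → ℝ}

lemma cnorm2_real (w : Fin N → ℝ) : cnorm2 (fun i => (w i : ℂ)) = rnorm2 w := by
  simp [cnorm2, rnorm2, Real.norm_eq_abs, sq_abs]

lemma rnorm2_nonneg (w : Fin N → ℝ) : 0 ≤ rnorm2 w := Real.sqrt_nonneg _

lemma Lpow_apply_real (μ : Fin N → ℝ) (x : ℝ) (w : Fin N → ℝ) :
    (Lpow (cvec h) (nuOf μ) x).mulVec (fun i => (w i : ℂ))
      = fun i => ((∑ j, (nuOf μ j) ^ x * (h j ⬝ᵥ w) * h j i : ℝ) : ℂ) := by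
  funext i
  simp only [Lpow, specOp, Matrix.mulVec, dotProduct, Matrix.sum_apply, Matrix.smul_apply,
    Matrix.vecMulVec_apply, cvec, smul_eq_mul, Pi.star_apply, Complex.star_def,
    Complex.conj_ofReal]
  push_cast
  simp_rw [Finset.sum_mul]
  rw [Finset.sum_comm]
  refine Finset.sum_congr rfl fun j _ => ?_
  rw [Finset.mul_sum, Finset.sum_mul]
  exact Finset.sum_congr rfl fun k _ => by ring

lemma le_muHigh {μ : Fin N → ℝ} (hN : 2 ≤ N) {j : Fin N} (hj : 0 < (j : ℕ)) :
    |μ j| ≤ muHigh μ := by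
  have : Nonempty {i : Fin N // 0 < (i : ℕ)} := ⟨⟨⟨1, by omega⟩, Nat.one_pos⟩⟩
  rw [muHigh]
  exact le_ciSup (f := fun i : {i : Fin N // 0 < (i : ℕ)} => |μ i.1|)
    (Set.Finite.bddAbove (Set.finite_range _)) ⟨j, hj⟩

lemma muHigh_nonneg {μ : Fin N → ℝ} (hN : 2 ≤ N) : 0 ≤ muHigh μ :=
  (abs_nonneg _).trans (le_muHigh (μ := μ) hN (j := ⟨1, by omega⟩) Nat.one_pos)

lemma sum_rnorm_le {m : ℕ} (g : Fin m → Fin N → ℝ) :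
    ∑ j, rnorm2 (g j) ≤ Real.sqrt m * Real.sqrt (∑ j, ∑ i, g j i ^ 2) := by
  have h0 : ∀ j, rnorm2 (g j) ^ 2 = ∑ i, g j i ^ 2 := fun j =>
    Real.sq_sqrt (Finset.sum_nonneg fun i _ => sq_nonneg _)
  have cs : (∑ j, rnorm2 (g j)) ^ 2 ≤ (m : ℝ) * ∑ j, ∑ i, g j i ^ 2 := by
    have := Finset.sum_mul_sq_le_sq_mul_sq Finset.univ (fun _ : Fin m => (1 : ℝ))
      (fun j => rnorm2 (g j))
    simpa [h0] using this
  have hnn : 0 ≤ ∑ j, rnorm2 (g j) := Finset.sum_nonneg fun j _ => rnorm2_nonneg _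
  calc ∑ j, rnorm2 (g j) = Real.sqrt ((∑ j, rnorm2 (g j)) ^ 2) := (Real.sqrt_sq hnn).symm
    _ ≤ Real.sqrt ((m : ℝ) * ∑ j, ∑ i, g j i ^ 2) := Real.sqrt_le_sqrt cs
    _ = Real.sqrt m * Real.sqrt (∑ j, ∑ i, g j i ^ 2) := Real.sqrt_mul (Nat.cast_nonneg m) _

end aux

section aux
open Finset

variable {N : ℕ} {h : Fin N → Fin N → ℝ}

lemma Lpow_col_bound (hortho : ∀ i j, h i ⬝ᵥ h j = if i = j then 1 else 0)
    (hN : 2 ≤ N) (μ : Fin N → ℝ) {r : ℕ} (hr : 1 ≤ r)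
    (i0 : Fin N) (hi0 : (i0 : ℕ) = 0) (w : Fin N → ℝ) :
    cnorm2 ((Lpow (cvec h) (nuOf μ) ((r : ℝ) / 2)).mulVec (fun i => (w i : ℂ)))
      ≤ muHigh μ ^ ((r : ℝ) / 2) * rnorm2 (Pv (h i0) w) := by
  have hr1 : (1 : ℝ) ≤ (r : ℝ) := by exact_mod_cast hr
  set x : ℝ := (r : ℝ) / 2 with hx
  have hxx : x + x = (r : ℝ) := by rw [hx]; ring
  have hrne : x + x ≠ 0 := by rw [hxx]; linarith
  have hx0 : x ≠ 0 := by rw [hx]; intro hc; rw [div_eq_zero_iff] at hc; rcases hc with hc | hc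
    <;> [linarith; norm_num at hc]
  rw [Lpow_apply_real, cnorm2_real]
  set c : Fin N → ℝ := fun j => (nuOf μ j) ^ x * (h j ⬝ᵥ w) with hcdef
  have hcomb : ∑ i, (∑ j, c j * h j i) ^ 2 = ∑ j, c j ^ 2 := comb_norm hortho c
  have hbound : ∑ j, c j ^ 2 ≤ muHigh μ ^ (r : ℝ) * ∑ i, (Pv (h i0) w i) ^ 2 := by
    rw [Pv_norm_sq hortho i0 w, Finset.mul_sum]
    refine Finset.sum_le_sum fun j _ => ?_
    by_cases hj : j = i0
    · subst hj
      have hnu0 : nuOf μ j = 0 := by simp [nuOf, hi0]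
      simp [hcdef, hnu0, Real.zero_rpow hx0]
    · have hjne : (j : ℕ) ≠ 0 := by
        intro hc
        exact hj (Fin.ext (by rw [hc, hi0]))
      have hnu : nuOf μ j = |μ j| := by simp [nuOf, hjne]
      have hnn : 0 ≤ nuOf μ j := by rw [hnu]; exact abs_nonneg _
      have hsq : ((nuOf μ j) ^ x) ^ 2 = (nuOf μ j) ^ (r : ℝ) := by
        rw [sq, ← Real.rpow_add' hnn hrne, hxx]
      have hle : (nuOf μ j) ^ (r : ℝ) ≤ muHigh μ ^ (r : ℝ) := by
        refine Real.rpow_le_rpow hnn ?_ (by positivity)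
        rw [hnu]
        exact le_muHigh hN (Nat.pos_of_ne_zero hjne)
      simp only [hj, if_false, hcdef]
      rw [mul_pow, hsq]
      exact mul_le_mul_of_nonneg_right hle (sq_nonneg _)
  have h1 : rnorm2 (fun i => ∑ j, c j * h j i) = Real.sqrt (∑ j, c j ^ 2) := by
    rw [rnorm2, hcomb]
  rw [show (fun i => ((∑ j, (nuOf μ j) ^ x * (h j ⬝ᵥ w) * h j i : ℝ))) =
      (fun i => ∑ j, c j * h j i) from rfl, h1]
  calc Real.sqrt (∑ j, c j ^ 2)
      ≤ Real.sqrt (muHigh μ ^ (r : ℝ) * ∑ i, (Pv (h i0) w i) ^ 2) := Real.sqrt_le_sqrt hbound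
    _ = muHigh μ ^ x * rnorm2 (Pv (h i0) w) := by
        rw [Real.sqrt_mul (Real.rpow_nonneg (muHigh_nonneg hN) _), rnorm2]
        congr 1
        rw [← hxx, Real.rpow_add' (muHigh_nonneg hN) hrne,
          Real.sqrt_mul_self (Real.rpow_nonneg (muHigh_nonneg hN) _)]

end aux


section aux
open Finset

variable {N : ℕ}

lemma sum_colnorm_le {m : ℕ} (X : Matrix (Fin N) (Fin m) ℝ) :
    ∑ j, rnorm2 (fun i => X i j) ≤ Real.sqrt m * frob X := by
  have hs := sum_rnorm_le (fun j i => X i j)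
  rwa [show (∑ j, ∑ i, X i j ^ 2) = ∑ i, ∑ j, X i j ^ 2 from Finset.sum_comm] at hs

end aux

/-- let `r ≥ 1` and `m = m_K`. If `C_1 > 0` is such that
`𝒦_r(G, s) ≥ C_1 𝒲_r(G, s)` for every `G ∈ ℝ^{N×m}` and `s > 0` (moduli taken with
respect to the high pass `H̃`), then for every target `F ∈ ℝ^{N×m}` and every `t > 0`,
`‖F - F^(K)‖_F ≥ m^{-1/2} C_1 𝒲_r(F, t) - (t/2)^r μ_high^{K + r/2} ‖F^(0)‖_F`. -/
theorem stmt16 (N K : ℕ) (hN : 2 ≤ N) (hK : 1 ≤ K)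
    (H : Matrix (Fin N) (Fin N) ℝ) (hH : H.IsSymm)
    (h : Fin N → Fin N → ℝ)
    (hortho : ∀ i j, h i ⬝ᵥ h j = if i = j then 1 else 0)
    (μ : Fin N → ℝ) (heig : ∀ i, H *ᵥ h i = μ i • h i)
    (h1pos : ∀ x, 0 ≤ h ⟨0, by omega⟩ x)
    (m : ℕ → ℕ) (W : ∀ k, Matrix (Fin (m k)) (Fin (m (k + 1))) ℝ)
    (hW : ∀ k, k < K → frob (W k) ≤ 1)
    (F : ∀ k, Matrix (Fin N) (Fin (m k)) ℝ)
    (hF : ∀ k, k < K → F (k + 1) = reluM (H * F k * W k))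
    (r : ℕ) (hr : 1 ≤ r) (C1 : ℝ) (hC1 : 0 < C1)
    (hlow : ∀ (G : Matrix (Fin N) (Fin (m K)) ℝ) (s : ℝ), 0 < s →
      C1 * Wcal (cvec h) (nuOf μ) r (cmat G) s ≤ Kcal (cvec h) (nuOf μ) r (cmat G) s)
    (Ft : Matrix (Fin N) (Fin (m K)) ℝ) (t : ℝ) (ht : 0 < t) :
    (Real.sqrt (m K))⁻¹ * C1 * Wcal (cvec h) (nuOf μ) r (cmat Ft) t -
        (t / 2) ^ r * muHigh μ ^ ((K : ℝ) + (r : ℝ) / 2) * frob (F 0) ≤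
      frob (Ft - F K) := by
  have hN0 : 0 < N := by omega
  set i0 : Fin N := ⟨0, by omega⟩ with hi0def
  have hpos : ∀ x, 0 ≤ h i0 x := h1pos
  set B : ℝ := muHigh μ with hBdef
  have hBnn : 0 ≤ B := muHigh_nonneg hN
  have hBj : ∀ j : Fin N, j ≠ i0 → |μ j| ≤ B := by
    intro j hj
    refine le_muHigh hN ?_
    have hi0v : (i0 : ℕ) = 0 := rfl
    have hne : (j : ℕ) ≠ 0 := fun hc => hj (Fin.ext (hc.trans hi0v.symm))
    exact Nat.pos_of_ne_zero hne
  have htau : (0:ℝ) ≤ (t / 2) ^ r := by positivity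
  -- contraction along layers
  have hS : ∀ k, k ≤ K → ∑ i, ∑ j, (Pcol (h i0) (F k) i j) ^ 2
      ≤ (B ^ 2) ^ k * ∑ i, ∑ j, (F 0 i j) ^ 2 := by
    intro k
    induction k with
    | zero => intro _; simpa using sumsq_Pcol_le hortho i0 (F 0)
    | succ k ih =>
      intro hk1
      have hk : k < K := by omega
      have hWnn : (0:ℝ) ≤ ∑ a, ∑ b, (W k a b) ^ 2 := by positivity
      have hWk : ∑ a, ∑ b, (W k a b) ^ 2 ≤ 1 := by
        have h1 : Real.sqrt (∑ a, ∑ b, (W k a b) ^ 2) ≤ 1 := hW k hk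
        nlinarith [Real.sq_sqrt hWnn, Real.sqrt_nonneg (∑ a, ∑ b, (W k a b) ^ 2)]
      calc ∑ i, ∑ j, (Pcol (h i0) (F (k + 1)) i j) ^ 2
          = ∑ i, ∑ j, (Pcol (h i0) (reluM (H * F k * W k)) i j) ^ 2 := by rw [hF k hk]
        _ ≤ ∑ i, ∑ j, (Pcol (h i0) (H * F k * W k) i j) ^ 2 :=
            sumsq_Pcol_relu hortho i0 hpos _
        _ = ∑ i, ∑ j, ((Pcol (h i0) (H * F k) * W k) i j) ^ 2 := by
            rw [← Pcol_mul]
        _ ≤ (∑ i, ∑ j, (Pcol (h i0) (H * F k) i j) ^ 2) * (∑ a, ∑ b, (W k a b) ^ 2) :=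
            sumsq_matmul _ _
        _ ≤ (∑ i, ∑ j, (Pcol (h i0) (H * F k) i j) ^ 2) * 1 := by
            refine mul_le_mul_of_nonneg_left hWk (by positivity)
        _ = ∑ i, ∑ j, (Pcol (h i0) (H * F k) i j) ^ 2 := mul_one _
        _ ≤ B ^ 2 * ∑ i, ∑ j, (Pcol (h i0) (F k) i j) ^ 2 :=
            sumsq_Pcol_H hortho hH heig i0 hBj _
        _ ≤ B ^ 2 * ((B ^ 2) ^ k * ∑ i, ∑ j, (F 0 i j) ^ 2) :=
            mul_le_mul_of_nonneg_left (ih (le_of_lt hk)) (sq_nonneg _)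
        _ = (B ^ 2) ^ (k + 1) * ∑ i, ∑ j, (F 0 i j) ^ 2 := by ring
  rcases Nat.eq_zero_or_pos (m K) with hm0 | hmpos
  · -- degenerate case: no channels
    have hempty : IsEmpty (Fin (m K)) := by rw [hm0]; infer_instance
    have hw : Wcal (cvec h) (nuOf μ) r (cmat Ft) t = 0 := by
      rw [Wcal, Finset.univ_eq_empty, Finset.sum_empty]
    rw [hw]
    have h2 : (0:ℝ) ≤ (t / 2) ^ r * B ^ ((K : ℝ) + (r : ℝ) / 2) * frob (F 0) :=
      mul_nonneg (mul_nonneg htau (Real.rpow_nonneg hBnn _)) (Real.sqrt_nonneg _)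
    have h3 : (0:ℝ) ≤ frob (Ft - F K) := Real.sqrt_nonneg _
    have h4 : (Real.sqrt (m K))⁻¹ * C1 * 0 = 0 := by ring
    rw [h4, zero_sub]
    linarith
  -- main case
  have hfrobP : frob (Pcol (h i0) (F K)) ≤ B ^ K * frob (F 0) := by
    have hSK := hS K le_rfl
    calc frob (Pcol (h i0) (F K))
        = Real.sqrt (∑ i, ∑ j, (Pcol (h i0) (F K) i j) ^ 2) := rfl
      _ ≤ Real.sqrt ((B ^ 2) ^ K * ∑ i, ∑ j, (F 0 i j) ^ 2) := Real.sqrt_le_sqrt hSK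
      _ = B ^ K * frob (F 0) := by
          rw [show ((B ^ 2) ^ K : ℝ) = (B ^ K) ^ 2 by ring,
            Real.sqrt_mul (sq_nonneg _), Real.sqrt_sq (pow_nonneg hBnn K)]
          rfl
  have hKup : Kcal (cvec h) (nuOf μ) r (cmat Ft) t ≤
      (∑ j, cnorm2 (fun i => cmat Ft i j - cmat (F K) i j)) +
      (t / 2) ^ r * ∑ j, cnorm2 ((Lpow (cvec h) (nuOf μ) ((r : ℝ) / 2)).mulVec
        (fun i => cmat (F K) i j)) := by
    rw [Kcal]
    refine ciInf_le ⟨0, ?_⟩ (cmat (F K))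
    rintro y ⟨G, rfl⟩
    exact add_nonneg (Finset.sum_nonneg fun j _ => Real.sqrt_nonneg _)
      (mul_nonneg htau (Finset.sum_nonneg fun j _ => Real.sqrt_nonneg _))
  have hT1 : (∑ j, cnorm2 (fun i => cmat Ft i j - cmat (F K) i j))
      ≤ Real.sqrt (m K) * frob (Ft - F K) := by
    have he : ∀ j, cnorm2 (fun i => cmat Ft i j - cmat (F K) i j)
        = rnorm2 (fun i => (Ft - F K) i j) := by
      intro j
      have hfe : (fun i => cmat Ft i j - cmat (F K) i j)
          = fun i => (((Ft - F K) i j : ℝ) : ℂ) := by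
        funext i
        simp [cmat, Matrix.sub_apply]
      rw [hfe, cnorm2_real]
    simp_rw [he]
    exact sum_colnorm_le (Ft - F K)
  have hT2 : (∑ j, cnorm2 ((Lpow (cvec h) (nuOf μ) ((r : ℝ) / 2)).mulVec
        (fun i => cmat (F K) i j)))
      ≤ B ^ ((r : ℝ) / 2) * (Real.sqrt (m K) * (B ^ K * frob (F 0))) := by
    have step1 : (∑ j, cnorm2 ((Lpow (cvec h) (nuOf μ) ((r : ℝ) / 2)).mulVec
          (fun i => cmat (F K) i j)))
        ≤ ∑ j, B ^ ((r : ℝ) / 2) * rnorm2 (fun i => Pcol (h i0) (F K) i j) := by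
      refine Finset.sum_le_sum fun j _ => ?_
      exact Lpow_col_bound hortho hN μ hr i0 rfl (fun i => F K i j)
    have step2 : ∑ j, B ^ ((r : ℝ) / 2) * rnorm2 (fun i => Pcol (h i0) (F K) i j)
        ≤ B ^ ((r : ℝ) / 2) * (Real.sqrt (m K) * (B ^ K * frob (F 0))) := by
      rw [← Finset.mul_sum]
      refine mul_le_mul_of_nonneg_left ?_ (Real.rpow_nonneg hBnn _)
      calc ∑ j, rnorm2 (fun i => Pcol (h i0) (F K) i j)
          ≤ Real.sqrt (m K) * frob (Pcol (h i0) (F K)) := sum_colnorm_le _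
        _ ≤ Real.sqrt (m K) * (B ^ K * frob (F 0)) :=
            mul_le_mul_of_nonneg_left hfrobP (Real.sqrt_nonneg _)
    exact step1.trans step2
  have main : C1 * Wcal (cvec h) (nuOf μ) r (cmat Ft) t ≤
      Real.sqrt (m K) * frob (Ft - F K) +
      (t / 2) ^ r * (B ^ ((r : ℝ) / 2) * (Real.sqrt (m K) * (B ^ K * frob (F 0)))) := by
    refine (hlow Ft t ht).trans (hKup.trans ?_)
    exact add_le_add hT1 (mul_le_mul_of_nonneg_left hT2 htau)
  have ha : 0 < Real.sqrt (m K) := Real.sqrt_pos.mpr (by exact_mod_cast hmpos)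
  have hpow : B ^ ((K : ℝ) + (r : ℝ) / 2) = B ^ K * B ^ ((r : ℝ) / 2) := by
    have hKr : (K : ℝ) + (r : ℝ) / 2 ≠ 0 := by
      have h1 : (1:ℝ) ≤ (K:ℝ) := by exact_mod_cast hK
      have h2 : (1:ℝ) ≤ (r:ℝ) := by exact_mod_cast hr
      intro hc; nlinarith
    rw [Real.rpow_add' hBnn hKr, Real.rpow_natCast]
  rw [hpow]
  have step2 : (Real.sqrt (m K))⁻¹ * (C1 * Wcal (cvec h) (nuOf μ) r (cmat Ft) t)
      ≤ frob (Ft - F K) + (t / 2) ^ r * (B ^ K * B ^ ((r : ℝ) / 2)) * frob (F 0) := by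
    calc (Real.sqrt (m K))⁻¹ * (C1 * Wcal (cvec h) (nuOf μ) r (cmat Ft) t)
        ≤ (Real.sqrt (m K))⁻¹ * (Real.sqrt (m K) * frob (Ft - F K) +
          (t / 2) ^ r * (B ^ ((r : ℝ) / 2) * (Real.sqrt (m K) * (B ^ K * frob (F 0))))) :=
          mul_le_mul_of_nonneg_left main (inv_nonneg.mpr ha.le)
      _ = frob (Ft - F K) + (t / 2) ^ r * (B ^ K * B ^ ((r : ℝ) / 2)) * frob (F 0) := by
          field_simp
  rw [mul_assoc]
  linarith
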